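/- Let n ≥ 2, K ∈ 𝒦 with constant C₀ in the size bound, let f : ℝ^{n−1} → ℝ be Lipschitz, L > max{1, Lip(f)}, let ν be a finite Radon measure on ℝⁿ, and let g ∈ L¹(ν). Then for every x ∈ C_f, every y ∈ Γ(x), with r = |x − y|: ∫_{H_f^− ∩ B(x,2r)} |K(y−z)| |g(z)| dν(z) ≤ (16L)^{n−1} C₀ M_ν g(x), where M_ν g(x) = sup_{ρ>0} ρ^{1−n} ∫_{B(x,ρ)} |g| dν. -/

import Mathlib

/-!
The cone `Γ(x)` has slope `4L` while the graph of `f` has slope `< L`, so the cone stays away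
from the region below the graph: `|x - y| ≤ 8L |y - z|` for every `z ∈ H_f^-`. The size bound
on `K` then gives `|K(y - z)| ≤ (16L)^(n-1) C₀ (2r)^(1-n)` on `H_f^-`, and integrating `|g|`
over `B(x, 2r)` against this constant is one of the terms in the supremum defining `M_ν g(x)`.
-/

open MeasureTheory Metric ENNReal Filter Set Topology

noncomputable section

/-- Projection of a point of `ℝ^(m+1)` onto its first `m` coordinates. -/
def proj {m : ℕ} (p : EuclideanSpace ℝ (Fin (m + 1))) : EuclideanSpace ℝ (Fin m) :=
  WithLp.toLp 2 (fun i : Fin m => p i.castSucc)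

/-- The graph `C_f` of `f : ℝ^m → ℝ`, as a subset of `ℝ^(m+1)`. -/
def graphSet {m : ℕ} (f : EuclideanSpace ℝ (Fin m) → ℝ) :
    Set (EuclideanSpace ℝ (Fin (m + 1))) :=
  {p | p (Fin.last m) = f (proj p)}

/-- The open region `H_f^-` below the graph of `f`. -/
def lowerSet {m : ℕ} (f : EuclideanSpace ℝ (Fin m) → ℝ) :
    Set (EuclideanSpace ℝ (Fin (m + 1))) :=
  {p | p (Fin.last m) < f (proj p)}

/-- The cone `Γ((u₀, f u₀)) = {(u,t) : t - f u₀ > 4 L |u - u₀|}`. -/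
def cone {m : ℕ} (f : EuclideanSpace ℝ (Fin m) → ℝ) (L : ℝ)
    (u₀ : EuclideanSpace ℝ (Fin m)) : Set (EuclideanSpace ℝ (Fin (m + 1))) :=
  {p | 4 * L * ‖proj p - u₀‖ < p (Fin.last m) - f u₀}

/-- The maximal function `M_ν g(x) = sup_{ρ>0} ρ^{1-n} ∫_{B(x,ρ)} |g| dν` (here `n = m + 1`,
so `1 - n = -m`). -/
def radialMax {m : ℕ} (ν : Measure (EuclideanSpace ℝ (Fin (m + 1))))
    (g : EuclideanSpace ℝ (Fin (m + 1)) → ℝ)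
    (x : EuclideanSpace ℝ (Fin (m + 1))) : ℝ≥0∞ :=
  ⨆ (ρ : ℝ) (_ : 0 < ρ),
    ENNReal.ofReal (ρ ^ (-(m : ℝ))) * ∫⁻ y in closedBall x ρ, ENNReal.ofReal |g y| ∂ν

lemma norm_sq_eq_norm_proj_sq_add_sq {m : ℕ} (p : EuclideanSpace ℝ (Fin (m + 1))) :
    ‖p‖ ^ 2 = ‖proj p‖ ^ 2 + p (Fin.last m) ^ 2 := by
  simp [EuclideanSpace.real_norm_sq_eq, Fin.sum_univ_castSucc, proj]

lemma norm_proj_le {m : ℕ} (p : EuclideanSpace ℝ (Fin (m + 1))) : ‖proj p‖ ≤ ‖p‖ := by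
  rw [← pow_le_pow_iff_left₀ (norm_nonneg _) (norm_nonneg _) two_ne_zero,
    norm_sq_eq_norm_proj_sq_add_sq p]
  exact le_add_of_nonneg_right (sq_nonneg _)

lemma norm_le_norm_proj_add_abs_last {m : ℕ} (p : EuclideanSpace ℝ (Fin (m + 1))) :
    ‖p‖ ≤ ‖proj p‖ + |p (Fin.last m)| := by
  rw [← pow_le_pow_iff_left₀ (norm_nonneg _) (by positivity) two_ne_zero,
    norm_sq_eq_norm_proj_sq_add_sq p, ← sq_abs (p (Fin.last m))]
  nlinarith [norm_nonneg (proj p), abs_nonneg (p (Fin.last m))]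

lemma proj_sub {m : ℕ} (p q : EuclideanSpace ℝ (Fin (m + 1))) :
    proj (p - q) = proj p - proj q := by
  ext i; simp [proj]

lemma norm_proj_sub_proj_le {m : ℕ} (p q : EuclideanSpace ℝ (Fin (m + 1))) :
    ‖proj p - proj q‖ ≤ ‖p - q‖ :=
  proj_sub p q ▸ norm_proj_le (p - q)

lemma continuous_proj {m : ℕ} : Continuous (proj (m := m)) := by
  unfold proj; fun_prop

lemma isOpen_lowerSet {m : ℕ} {f : EuclideanSpace ℝ (Fin m) → ℝ} (hf : Continuous f) :
    IsOpen (lowerSet f) :=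
  isOpen_lt (by fun_prop) (hf.comp continuous_proj)

section Cone

variable {m : ℕ} {f : EuclideanSpace ℝ (Fin m) → ℝ} {L : ℝ}
  {x y : EuclideanSpace ℝ (Fin (m + 1))}

lemma ne_of_mem_graphSet_of_mem_cone (hL : 0 ≤ L) (hx : x ∈ graphSet f)
    (hy : y ∈ cone f L (proj x)) : x ≠ y := by
  rintro rfl
  have : 0 < x (Fin.last m) - f (proj x) := lt_of_le_of_lt (by positivity) hy
  rw [hx, sub_self] at this
  exact this.false

lemma norm_sub_le_of_mem_cone {Lf : NNReal} (hf : LipschitzWith Lf f) (hLf : (Lf : ℝ) ≤ L)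
    (hL : 1 ≤ L) (hx : x ∈ graphSet f) (hy : y ∈ cone f L (proj x))
    {z : EuclideanSpace ℝ (Fin (m + 1))} (hz : z ∈ lowerSet f) :
    ‖x - y‖ ≤ 8 * L * ‖y - z‖ := by
  set a := ‖proj y - proj x‖
  set b := ‖y - z‖
  set A := y (Fin.last m) - f (proj x)
  have hcone : 4 * L * a < A := hy
  have hlip : ∀ u v, f u - f v ≤ L * ‖u - v‖ := fun u v =>
    calc f u - f v ≤ dist (f u) (f v) := le_abs_self _
      _ ≤ Lf * dist u v := hf.dist_le_mul u v
      _ ≤ L * ‖u - v‖ := by rw [dist_eq_norm]; gcongr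
  have hxy : ‖x - y‖ ≤ a + A := by
    have h := norm_le_norm_proj_add_abs_last (x - y)
    rwa [proj_sub, norm_sub_rev (proj x), PiLp.sub_apply, hx, abs_sub_comm,
      abs_of_pos (lt_of_le_of_lt (by positivity) hcone)] at h
  have hyz : y (Fin.last m) - z (Fin.last m) ≤ b := by
    simpa using (le_abs_self _).trans (PiLp.norm_apply_le (y - z) (Fin.last m))
  have hfz : f (proj z) - f (proj x) ≤ L * (a + b) := by
    have hzy : ‖proj z - proj y‖ ≤ b :=
      (norm_proj_sub_proj_le z y).trans_eq (norm_sub_rev z y)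
    calc f (proj z) - f (proj x) ≤ L * ‖proj z - proj x‖ := hlip _ _
      _ ≤ L * (a + b) := by
        refine mul_le_mul_of_nonneg_left ?_ (by linarith)
        linarith [norm_sub_le_norm_sub_add_norm_sub (proj z) (proj y) (proj x)]
  have hz' : z (Fin.last m) < f (proj z) := hz
  have ha : a ≤ L * a := le_mul_of_one_le_left (norm_nonneg _) hL
  have hb : b ≤ L * b := le_mul_of_one_le_left (norm_nonneg _) hL
  -- `A < b + L (a + b)` and `L a < A / 4` give `A < 8 L b / 3`, while `‖x - y‖ < 5 A / 4`.
  linarith [norm_nonneg (y - z)]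

end Cone

lemma setLIntegral_le_radialMax {m : ℕ} (ν : Measure (EuclideanSpace ℝ (Fin (m + 1))))
    (g k : EuclideanSpace ℝ (Fin (m + 1)) → ℝ) {x : EuclideanSpace ℝ (Fin (m + 1))}
    {s : Set (EuclideanSpace ℝ (Fin (m + 1)))} {ρ A : ℝ} (hs : MeasurableSet s)
    (hsρ : s ⊆ closedBall x ρ) (hρ : 0 < ρ) (hA : 0 ≤ A)
    (hk : ∀ z ∈ s, |k z| ≤ A * ρ ^ (-(m : ℝ))) :
    ∫⁻ z in s, ENNReal.ofReal (|k z| * |g z|) ∂ν ≤ ENNReal.ofReal A * radialMax ν g x :=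
  calc ∫⁻ z in s, ENNReal.ofReal (|k z| * |g z|) ∂ν
      ≤ ∫⁻ z in s, ENNReal.ofReal A *
          (ENNReal.ofReal (ρ ^ (-(m : ℝ))) * ENNReal.ofReal |g z|) ∂ν := by
        refine setLIntegral_mono' hs fun z hz => ?_
        rw [← ENNReal.ofReal_mul (by positivity), ← ENNReal.ofReal_mul hA, ← mul_assoc]
        gcongr
        exact hk z hz
    _ ≤ ∫⁻ z in closedBall x ρ, ENNReal.ofReal A *
          (ENNReal.ofReal (ρ ^ (-(m : ℝ))) * ENNReal.ofReal |g z|) ∂ν :=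
        lintegral_mono_set hsρ
    _ = ENNReal.ofReal A * (ENNReal.ofReal (ρ ^ (-(m : ℝ))) *
          ∫⁻ z in closedBall x ρ, ENNReal.ofReal |g z| ∂ν) := by
        rw [lintegral_const_mul' _ _ ENNReal.ofReal_ne_top,
          lintegral_const_mul' _ _ ENNReal.ofReal_ne_top]
    _ ≤ ENNReal.ofReal A * radialMax ν g x := by
        gcongr
        exact le_iSup₂ (f := fun ρ (_ : 0 < ρ) => ENNReal.ofReal (ρ ^ (-(m : ℝ))) *
          ∫⁻ z in closedBall x ρ, ENNReal.ofReal |g z| ∂ν) ρ hρ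

theorem statement12_general (m : ℕ)
    (K : EuclideanSpace ℝ (Fin (m + 1)) → ℝ) (C₀ : ℝ)
    (hK_size : ∀ x : EuclideanSpace ℝ (Fin (m + 1)), x ≠ 0 →
      |K x| ≤ C₀ * ‖x‖ ^ (-(m : ℝ)))
    (f : EuclideanSpace ℝ (Fin m) → ℝ) (Lf : NNReal) (hf : LipschitzWith Lf f)
    (L : ℝ) (hL : max 1 (Lf : ℝ) < L)
    (ν : Measure (EuclideanSpace ℝ (Fin (m + 1))))
    (g : EuclideanSpace ℝ (Fin (m + 1)) → ℝ)
    (x : EuclideanSpace ℝ (Fin (m + 1))) (hx : x ∈ graphSet f)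
    (y : EuclideanSpace ℝ (Fin (m + 1))) (hy : y ∈ cone f L (proj x)) :
    ∫⁻ z in lowerSet f ∩ closedBall x (2 * ‖x - y‖),
        ENNReal.ofReal (|K (y - z)| * |g z|) ∂ν
      ≤ ENNReal.ofReal ((16 * L) ^ m * C₀) * radialMax ν g x := by
  obtain ⟨hL1, hLf⟩ := max_lt_iff.mp hL
  have hr : 0 < ‖x - y‖ :=
    norm_sub_pos_iff.mpr (ne_of_mem_graphSet_of_mem_cone (by linarith) hx hy)
  have hC₀ : 0 ≤ C₀ := by
    have h := (abs_nonneg _).trans (hK_size (x - y) (norm_pos_iff.mp hr))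
    exact nonneg_of_mul_nonneg_left h (Real.rpow_pos_of_pos hr _)
  refine setLIntegral_le_radialMax ν g (fun z => K (y - z))
    ((isOpen_lowerSet hf.continuous).measurableSet.inter measurableSet_closedBall)
    inter_subset_right (by positivity) (by positivity) fun z ⟨hz, _⟩ => ?_
  have hyz : 2 * ‖x - y‖ / (16 * L) ≤ ‖y - z‖ := by
    rw [div_le_iff₀ (by positivity)]
    linarith [norm_sub_le_of_mem_cone hf hLf.le hL1.le hx hy hz]
  calc |K (y - z)| ≤ C₀ * ‖y - z‖ ^ (-(m : ℝ)) :=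
        hK_size _ (norm_pos_iff.mp (lt_of_lt_of_le (by positivity) hyz))
    _ ≤ C₀ * (2 * ‖x - y‖ / (16 * L)) ^ (-(m : ℝ)) :=
        mul_le_mul_of_nonneg_left
          (Real.rpow_le_rpow_of_nonpos (by positivity) hyz (by simp)) hC₀
    _ = (16 * L) ^ m * C₀ * (2 * ‖x - y‖) ^ (-(m : ℝ)) := by
        rw [Real.div_rpow (by positivity) (by positivity),
          Real.rpow_neg (by positivity : (0 : ℝ) ≤ 16 * L), Real.rpow_natCast, div_inv_eq_mul]
        ring

/-- For `K ∈ 𝒦` with size constant `C₀`, `f` Lipschitz,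
`L > max{1, Lip f}`, `ν` a finite measure, `g ∈ L¹(ν)`, `x ∈ C_f`, `y ∈ Γ(x)` and
`r = |x - y|`: `∫_{H_f^- ∩ B(x,2r)} |K(y-z)| |g(z)| dν(z) ≤ (16L)^{n-1} C₀ M_ν g(x)`. -/
theorem statement12 (m : ℕ) (hm : 1 ≤ m)
    (K : EuclideanSpace ℝ (Fin (m + 1)) → ℝ) (C₀ C₁ : ℝ)
    (hK_diff : ContDiffOn ℝ 1 K {0}ᶜ)
    (hK_anti : ∀ x : EuclideanSpace ℝ (Fin (m + 1)), x ≠ 0 → K (-x) = -K x)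
    (hK_size : ∀ x : EuclideanSpace ℝ (Fin (m + 1)), x ≠ 0 →
      |K x| ≤ C₀ * ‖x‖ ^ (-(m : ℝ)))
    (hK_grad : ∀ x : EuclideanSpace ℝ (Fin (m + 1)), x ≠ 0 →
      ‖fderiv ℝ K x‖ ≤ C₁ * ‖x‖ ^ (-(m : ℝ) - 1))
    (f : EuclideanSpace ℝ (Fin m) → ℝ) (Lf : NNReal) (hf : LipschitzWith Lf f)
    (L : ℝ) (hL : max 1 (Lf : ℝ) < L)
    (ν : Measure (EuclideanSpace ℝ (Fin (m + 1)))) [IsFiniteMeasure ν]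
    (g : EuclideanSpace ℝ (Fin (m + 1)) → ℝ) (hg : Integrable g ν)
    (x : EuclideanSpace ℝ (Fin (m + 1))) (hx : x ∈ graphSet f)
    (y : EuclideanSpace ℝ (Fin (m + 1))) (hy : y ∈ cone f L (proj x)) :
    ∫⁻ z in lowerSet f ∩ closedBall x (2 * ‖x - y‖),
        ENNReal.ofReal (|K (y - z)| * |g z|) ∂ν
      ≤ ENNReal.ofReal ((16 * L) ^ m * C₀) * radialMax ν g x :=
  statement12_general m K C₀ hK_size f Lf hf L hL ν g x hx y hy
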